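/- Let R₅ = {a₀, a₁, a₂, a₃, a₄} be the dihedral quandle of order 5 and consider ℤ[R₅]. Set eᵢ = aᵢ − a₀ for i = 1, 2, 3, 4, and let Δ²(R₅) be the additive subgroup of ℤ[R₅] generated by all products u·v with u, v ∈ Δ(R₅). Then Δ²(R₅) is the additive subgroup generated by {e₁ − e₂ − e₄, e₂ + 2e₄, e₃ + 3e₄, 5e₄}, and the quotient abelian group Δ(R₅)/Δ²(R₅) is isomorphic to ℤ/5ℤ. -/

import Mathlib

/-!
Statement 17: For the dihedral quandle `R₅ = ZMod 5` and `ℤ[R₅]`, with `eᵢ = aᵢ − a₀`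
(`i = 1, 2, 3, 4`) and `Δ²(R₅)` the additive subgroup generated by all products `u·v`
with `u, v ∈ Δ(R₅)`:
`Δ²(R₅) = ⟨e₁ − e₂ − e₄, e₂ + 2e₄, e₃ + 3e₄, 5e₄⟩` and `Δ(R₅)/Δ²(R₅) ≅ ℤ/5ℤ`.
-/

variable {X : Type*}

/-- Multiplication on the free module `X →₀ ℤ` induced by a binary operation on `X`. -/
noncomputable def qmul (op : X → X → X) (u v : X →₀ ℤ) : X →₀ ℤ :=
  u.sum fun x a => v.sum fun y b => Finsupp.single (op x y) (a * b)

/-- The augmentation homomorphism `ℤ[X] → ℤ`. -/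
noncomputable def augHom : (X →₀ ℤ) →+ ℤ :=
  Finsupp.liftAddHom fun _ => AddMonoidHom.id ℤ

/-- The augmentation ideal `Δ(X)` of `ℤ[X]`, as an additive subgroup. -/
noncomputable def augKer (X : Type*) : AddSubgroup (X →₀ ℤ) := augHom.ker

/-- `Δ²(X)`: the additive subgroup generated by all products `u·v` with
`u, v ∈ Δ(X)`. -/
noncomputable def deltaSq (op : X → X → X) : AddSubgroup (X →₀ ℤ) :=
  AddSubgroup.closure
    {w | ∃ u v : X →₀ ℤ, u ∈ augKer X ∧ v ∈ augKer X ∧ w = qmul op u v}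

/-- The dihedral quandle operation on `ZMod n`: `aᵢ·aⱼ = a_{2j−i}`. -/
def dihedralOp (n : ℕ) : ZMod n → ZMod n → ZMod n := fun a b => 2 * b - a

/-! ### Auxiliary lemmas -/

lemma qmul_single_single (op : X → X → X) (x y : X) (a b : ℤ) :
    qmul op (Finsupp.single x a) (Finsupp.single y b) = Finsupp.single (op x y) (a * b) := by
  classical
  simp [qmul, Finsupp.sum_single_index]

lemma qmul_add_left (op : X → X → X) (u u' v : X →₀ ℤ) :
    qmul op (u + u') v = qmul op u v + qmul op u' v := by
  classical
  unfold qmul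
  apply Finsupp.sum_add_index <;> intros <;> simp [add_mul, Finsupp.sum_add]

lemma qmul_add_right (op : X → X → X) (u v v' : X →₀ ℤ) :
    qmul op u (v + v') = qmul op u v + qmul op u v' := by
  classical
  unfold qmul
  rw [← Finsupp.sum_add]
  apply Finsupp.sum_congr
  intro x _
  apply Finsupp.sum_add_index <;> intros <;> simp [mul_add]

/-- `qmul` as an `AddMonoidHom` in the left variable. -/
noncomputable def qmulL (op : X → X → X) (v : X →₀ ℤ) : (X →₀ ℤ) →+ (X →₀ ℤ) :=
  AddMonoidHom.mk' (fun u => qmul op u v) (fun u u' => qmul_add_left op u u' v)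

/-- `qmul` as an `AddMonoidHom` in the right variable. -/
noncomputable def qmulR (op : X → X → X) (u : X →₀ ℤ) : (X →₀ ℤ) →+ (X →₀ ℤ) :=
  AddMonoidHom.mk' (fun v => qmul op u v) (fun v v' => qmul_add_right op u v v')

lemma qmul_zero_left (op : X → X → X) (v : X →₀ ℤ) : qmul op 0 v = 0 :=
  map_zero (qmulL op v)

lemma qmul_zero_right (op : X → X → X) (u : X →₀ ℤ) : qmul op u 0 = 0 :=
  map_zero (qmulR op u)

lemma qmul_sub_left (op : X → X → X) (u u' v : X →₀ ℤ) :
    qmul op (u - u') v = qmul op u v - qmul op u' v :=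
  map_sub (qmulL op v) u u'

lemma qmul_sub_right (op : X → X → X) (u v v' : X →₀ ℤ) :
    qmul op u (v - v') = qmul op u v - qmul op u v' :=
  map_sub (qmulR op u) v v'

lemma augHom_single (x : X) (a : ℤ) : augHom (Finsupp.single x a) = a := by
  simp [augHom]

lemma augHom_qmul (op : X → X → X) (u v : X →₀ ℤ) :
    augHom (qmul op u v) = augHom u * augHom v := by
  induction u using Finsupp.induction_linear with
  | zero => simp [qmul_zero_left]
  | add f g hf hg =>
      rw [qmul_add_left, map_add, map_add, hf, hg, add_mul]
  | single x a =>
      induction v using Finsupp.induction_linear with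
      | zero => simp [qmul_zero_right]
      | add f g hf hg => rw [qmul_add_right, map_add, map_add, hf, hg, mul_add]
      | single y b => rw [qmul_single_single, augHom_single, augHom_single, augHom_single]

/-- The weight homomorphism `ℤ[R₅] → ℤ/5`, `aᵢ ↦ −i`. -/
noncomputable def psi : (ZMod 5 →₀ ℤ) →+ ZMod 5 :=
  Finsupp.liftAddHom fun i =>
    AddMonoidHom.mk' (fun a : ℤ => (-i) * ((a : ℤ) : ZMod 5)) (by intro a b; push_cast; ring)

lemma psi_single (i : ZMod 5) (a : ℤ) : psi (Finsupp.single i a) = -i * (a : ZMod 5) :=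
  Finsupp.liftAddHom_apply_single _ _ _

lemma psi_qmul (u v : ZMod 5 →₀ ℤ) :
    psi (qmul (dihedralOp 5) u v) =
      2 * ((augHom u : ℤ) : ZMod 5) * psi v - psi u * ((augHom v : ℤ) : ZMod 5) := by
  induction u using Finsupp.induction_linear with
  | zero => simp [qmul_zero_left]
  | add f g hf hg =>
      rw [qmul_add_left, map_add, map_add, map_add, hf, hg]; push_cast; ring
  | single x a =>
      induction v using Finsupp.induction_linear with
      | zero => simp [qmul_zero_right]
      | add f g hf hg =>
          rw [qmul_add_right, map_add, map_add, map_add, hf, hg]; push_cast; ring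
      | single y b =>
          rw [qmul_single_single, psi_single, psi_single, psi_single,
            augHom_single, augHom_single]
          show -(2 * y - x) * _ = _
          push_cast; ring

lemma zmod5_univ : (Finset.univ : Finset (ZMod 5)) = {0, 1, 2, 3, 4} := by decide

lemma augHom_coords (u : ZMod 5 →₀ ℤ) :
    augHom u = u 0 + u 1 + u 2 + u 3 + u 4 := by
  have h : augHom u = u.sum fun _ a => a := rfl
  rw [h, Finsupp.sum_fintype _ _ (fun _ => rfl), zmod5_univ]
  rw [Finset.sum_insert (by decide), Finset.sum_insert (by decide),
    Finset.sum_insert (by decide), Finset.sum_insert (by decide), Finset.sum_singleton]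
  ring

lemma psi_coords (u : ZMod 5 →₀ ℤ) :
    psi u = ((-(u 1 + 2 * u 2 + 3 * u 3 + 4 * u 4) : ℤ) : ZMod 5) := by
  have h : psi u = u.sum fun i a => -i * ((a : ℤ) : ZMod 5) := rfl
  rw [h, Finsupp.sum_fintype _ _ (fun _ => by simp), zmod5_univ]
  rw [Finset.sum_insert (by decide), Finset.sum_insert (by decide),
    Finset.sum_insert (by decide), Finset.sum_insert (by decide), Finset.sum_singleton]
  push_cast
  ring

/-- `eᵢ = aᵢ − a₀`. -/
noncomputable def Ee (i : ZMod 5) : ZMod 5 →₀ ℤ := Finsupp.single i 1 - Finsupp.single 0 1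

/-- The four claimed generators of `Δ²(R₅)`. -/
noncomputable def Tset : Set (ZMod 5 →₀ ℤ) :=
  {Ee 1 - Ee 2 - Ee 4, Ee 2 + (2 : ℤ) • Ee 4, Ee 3 + (3 : ℤ) • Ee 4, (5 : ℤ) • Ee 4}

lemma Ee_mem_augKer (i : ZMod 5) : Ee i ∈ augKer (ZMod 5) := by
  have : augHom (Ee i) = 0 := by
    rw [Ee, map_sub, augHom_single, augHom_single, sub_self]
  exact this

lemma mem_closureT (u : ZMod 5 →₀ ℤ) (h1 : augHom u = 0) (h2 : psi u = 0) :
    u ∈ AddSubgroup.closure Tset := by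
  rw [psi_coords, ZMod.intCast_zmod_eq_zero_iff_dvd] at h2
  rw [augHom_coords] at h1
  have hd : (5 : ℤ) ∣ (u 4 - u 1 - 2 * u 2 - 3 * u 3) := by omega
  obtain ⟨k, hk⟩ := hd
  have key : u = u 1 • (Ee 1 - Ee 2 - Ee 4) + (u 1 + u 2) • (Ee 2 + (2 : ℤ) • Ee 4)
      + u 3 • (Ee 3 + (3 : ℤ) • Ee 4) + k • ((5 : ℤ) • Ee 4) := by
    ext a
    rcases (show a = 0 ∨ a = 1 ∨ a = 2 ∨ a = 3 ∨ a = 4 by revert a; decide) with rfl | rfl | rfl | rfl | rfl <;>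
      simp (config := { decide := true }) [Ee, Finsupp.single_apply] <;> omega
  rw [key]
  refine AddSubgroup.add_mem _ (AddSubgroup.add_mem _ (AddSubgroup.add_mem _ ?_ ?_) ?_) ?_ <;>
    exact AddSubgroup.zsmul_mem _ (AddSubgroup.subset_closure (by simp [Tset])) _

/-- Expansion of products of the `eᵢ` into basis elements. -/
lemma qmul_Ee (x y : ZMod 5) :
    qmul (dihedralOp 5) (Ee x) (Ee y) =
      Finsupp.single (2 * y - x) 1 - Finsupp.single (2 * y) 1
        - Finsupp.single (-x) 1 + Finsupp.single 0 1 := by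
  rw [Ee, Ee, qmul_sub_left, qmul_sub_right, qmul_sub_right,
    qmul_single_single, qmul_single_single, qmul_single_single, qmul_single_single]
  show Finsupp.single (2 * y - x) _ - Finsupp.single (2 * 0 - x) _
      - (Finsupp.single (2 * y - 0) _ - Finsupp.single (2 * 0 - 0) _) = _
  norm_num
  abel

lemma qmul_Ee_mem (x y : ZMod 5) : qmul (dihedralOp 5) (Ee x) (Ee y) ∈ deltaSq (dihedralOp 5) :=
  AddSubgroup.subset_closure ⟨Ee x, Ee y, Ee_mem_augKer x, Ee_mem_augKer y, rfl⟩

lemma Tset_subset : Tset ⊆ (deltaSq (dihedralOp 5) : Set (ZMod 5 →₀ ℤ)) := by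
  have g11 := qmul_Ee 1 1
  have g13 := qmul_Ee 1 3
  have g14 := qmul_Ee 1 4
  have g31 := qmul_Ee 3 1
  norm_num at g11 g13 g14 g31
  intro w hw
  rcases hw with h | h | h | h
  · -- t1 = g(1,1)
    have : w = qmul (dihedralOp 5) (Ee 1) (Ee 1) := by
      rw [g11, h, Ee, Ee, Ee]
      ext a; rcases (show a = 0 ∨ a = 1 ∨ a = 2 ∨ a = 3 ∨ a = 4 by revert a; decide) with rfl | rfl | rfl | rfl | rfl <;> simp (config := { decide := true }) [Finsupp.single_apply]
    rw [this]; exact qmul_Ee_mem 1 1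
  · -- t2 = -g(1,1) - g(1,3)
    have : w = -(qmul (dihedralOp 5) (Ee 1) (Ee 1)) - qmul (dihedralOp 5) (Ee 1) (Ee 3) := by
      rw [g11, g13, h, Ee, Ee]
      ext a; rcases (show a = 0 ∨ a = 1 ∨ a = 2 ∨ a = 3 ∨ a = 4 by revert a; decide) with rfl | rfl | rfl | rfl | rfl <;> simp (config := { decide := true }) [Finsupp.single_apply]
    rw [this]
    exact AddSubgroup.sub_mem _ (AddSubgroup.neg_mem _ (qmul_Ee_mem 1 1)) (qmul_Ee_mem 1 3)
  · -- t3 = -g(1,1) - g(1,3) - g(1,4)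
    have : w = -(qmul (dihedralOp 5) (Ee 1) (Ee 1)) - qmul (dihedralOp 5) (Ee 1) (Ee 3)
        - qmul (dihedralOp 5) (Ee 1) (Ee 4) := by
      rw [g11, g13, g14, h, Ee, Ee]
      ext a; rcases (show a = 0 ∨ a = 1 ∨ a = 2 ∨ a = 3 ∨ a = 4 by revert a; decide) with rfl | rfl | rfl | rfl | rfl <;> simp (config := { decide := true }) [Finsupp.single_apply]
    rw [this]
    exact AddSubgroup.sub_mem _
      (AddSubgroup.sub_mem _ (AddSubgroup.neg_mem _ (qmul_Ee_mem 1 1)) (qmul_Ee_mem 1 3))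
      (qmul_Ee_mem 1 4)
  · -- t4 = -2 g(1,1) - 2 g(1,3) + g(3,1)
    have : w = (-2 : ℤ) • qmul (dihedralOp 5) (Ee 1) (Ee 1)
        + (-2 : ℤ) • qmul (dihedralOp 5) (Ee 1) (Ee 3) + qmul (dihedralOp 5) (Ee 3) (Ee 1) := by
      rw [g11, g13, g31, h, Ee]
      ext a; rcases (show a = 0 ∨ a = 1 ∨ a = 2 ∨ a = 3 ∨ a = 4 by revert a; decide) with rfl | rfl | rfl | rfl | rfl <;> simp (config := { decide := true }) [Finsupp.single_apply]
    rw [this]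
    refine AddSubgroup.add_mem _ (AddSubgroup.add_mem _ ?_ ?_) (qmul_Ee_mem 3 1) <;>
      exact AddSubgroup.zsmul_mem _ (qmul_Ee_mem _ _) _

lemma deltaSq_eq : deltaSq (dihedralOp 5) = AddSubgroup.closure Tset := by
  apply le_antisymm
  · rw [deltaSq, AddSubgroup.closure_le]
    rintro w ⟨u, v, hu, hv, rfl⟩
    have hu' : augHom u = 0 := hu
    have hv' : augHom v = 0 := hv
    apply mem_closureT
    · rw [augHom_qmul, hu', zero_mul]
    · rw [psi_qmul, hu', hv']
      push_cast
      ring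
  · rw [AddSubgroup.closure_le]
    exact Tset_subset

lemma psi_Tset : ∀ w ∈ AddSubgroup.closure Tset, psi w = 0 := by
  intro w hw
  have : AddSubgroup.closure Tset ≤ psi.ker := by
    rw [AddSubgroup.closure_le]
    intro t ht
    rcases ht with h | h | h | h <;>
      · subst h
        show psi _ = 0
        rw [psi_coords]
        simp (config := { decide := true }) [Ee, Finsupp.single_apply]
  exact this hw

theorem stmt_17 :
    let e₁ : ZMod 5 →₀ ℤ := Finsupp.single 1 1 - Finsupp.single 0 1
    let e₂ : ZMod 5 →₀ ℤ := Finsupp.single 2 1 - Finsupp.single 0 1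
    let e₃ : ZMod 5 →₀ ℤ := Finsupp.single 3 1 - Finsupp.single 0 1
    let e₄ : ZMod 5 →₀ ℤ := Finsupp.single 4 1 - Finsupp.single 0 1
    deltaSq (dihedralOp 5) =
      AddSubgroup.closure {e₁ - e₂ - e₄, e₂ + (2 : ℤ) • e₄, e₃ + (3 : ℤ) • e₄,
        (5 : ℤ) • e₄} ∧
    Nonempty
      ((↥(augKer (ZMod 5)) ⧸ (deltaSq (dihedralOp 5)).addSubgroupOf (augKer (ZMod 5))) ≃+
        ZMod 5) := by
  intro e₁ e₂ e₃ e₄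
  constructor
  · exact deltaSq_eq
  · -- build the isomorphism from the map `psi` restricted to the augmentation ideal
    set φ : ↥(augKer (ZMod 5)) →+ ZMod 5 := psi.comp (augKer (ZMod 5)).subtype with hφ
    have hker : (deltaSq (dihedralOp 5)).addSubgroupOf (augKer (ZMod 5)) = φ.ker := by
      ext x
      constructor
      · intro hx
        have : (x : ZMod 5 →₀ ℤ) ∈ deltaSq (dihedralOp 5) := hx
        rw [deltaSq_eq] at this
        exact psi_Tset _ this
      · intro hx
        have h1 : augHom (x : ZMod 5 →₀ ℤ) = 0 := x.2
        have h2 : psi (x : ZMod 5 →₀ ℤ) = 0 := hx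
        have : (x : ZMod 5 →₀ ℤ) ∈ deltaSq (dihedralOp 5) := by
          rw [deltaSq_eq]
          exact mem_closureT _ h1 h2
        exact this
    have hsurj : Function.Surjective φ := by
      intro z
      obtain ⟨n, rfl⟩ := ZMod.intCast_surjective z
      refine ⟨n • ⟨Ee 4, Ee_mem_augKer 4⟩, ?_⟩
      rw [map_zsmul]
      have : φ ⟨Ee 4, Ee_mem_augKer 4⟩ = 1 := by
        show psi (Ee 4) = 1
        rw [Ee, map_sub, psi_single, psi_single]
        decide
      rw [this]
      simp
    exact ⟨(QuotientAddGroup.quotientAddEquivOfEq hker).trans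
      (QuotientAddGroup.quotientKerEquivOfSurjective φ hsurj)⟩
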